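/- arXiv:2205.13616 — 3 statements merged into one kernel-verified Lean document; each statement's English description precedes it below -/
import Mathlib

section
/- Let t ∈ (0,1), k > 1. Let Σ_S be a positive definite p₁×p₁ matrix and Σ_{S^C} a positive definite p₂×p₂ matrix. Let M_b be the block diagonal matrix diag(Σ_S, Σ_{S^C}) and M_a = diag(k⁻¹Σ_S, kΣ_{S^C}). Let β_b = (u, 0) and β_a = (0, v) for u ∈ ℝ^{p₁}, v ∈ ℝ^{p₂}. Then the matrix M := (1-t)M_b + t·M_a is invertible and M⁻¹((1-t)M_b β_b + t M_a β_a) equals the block vector with first block [t k⁻¹ + (1-t)]⁻¹(1-t)·u and second block [tk + (1-t)]⁻¹ k t·v. -/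
/-!
Both covariances are block diagonal with scalar multiples of the same blocks `Σ_S`, `Σ_{S^C}`, so
`M = diag((t k⁻¹ + (1 - t)) Σ_S, (t k + (1 - t)) Σ_{S^C})` and the right-hand side is
`((1 - t) Σ_S u, k t Σ_{S^C} v)`. The system therefore decouples block by block, and in each block
the covariance cancels, leaving only the scalar factors.
-/

open Matrix

namespace Matrix

variable {m n : Type*}

theorem smul_fromBlocks_add_smul_fromBlocks_smul {R : Type*} [CommSemiring R]
    (A : Matrix m m R) (D : Matrix n n R) (a b c d : R) :
    c • fromBlocks A 0 0 D + d • fromBlocks (a • A) 0 0 (b • D) =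
      fromBlocks ((d * a + c) • A) 0 0 ((d * b + c) • D) := by
  simp only [fromBlocks_smul, fromBlocks_add, smul_zero, add_zero, smul_smul, add_smul,
    add_comm (c • _)]

theorem isUnit_det_fromBlocks_smul [Fintype m] [Fintype n] [DecidableEq m] [DecidableEq n]
    {R : Type*} [CommRing R] {A : Matrix m m R} {D : Matrix n n R} (hA : IsUnit A.det)
    (hD : IsUnit D.det) {a b : R} (ha : IsUnit a) (hb : IsUnit b) :
    IsUnit (fromBlocks (a • A) 0 0 (b • D)).det := by
  rw [det_fromBlocks_zero₁₂, det_smul, det_smul]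
  exact ((ha.pow _).mul hA).mul ((hb.pow _).mul hD)

theorem fromBlocks_smul_mulVec_sumElim [Fintype m] [Fintype n] {R : Type*} [CommSemiring R]
    (A : Matrix m m R) (D : Matrix n n R) (a b : R) (x : m → R) (y : n → R) :
    fromBlocks (a • A) 0 0 (b • D) *ᵥ Sum.elim x y =
      Sum.elim (a • A *ᵥ x) (b • D *ᵥ y) := by
  simp [fromBlocks_mulVec, smul_mulVec]

theorem inv_fromBlocks_smul_mulVec_sumElim [Fintype m] [Fintype n] [DecidableEq m]
    [DecidableEq n] {K : Type*} [Field K] {A : Matrix m m K} {D : Matrix n n K}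
    (hA : IsUnit A.det) (hD : IsUnit D.det) {a b : K} (ha : a ≠ 0) (hb : b ≠ 0) (c d : K)
    (x : m → K) (y : n → K) :
    (fromBlocks (a • A) 0 0 (b • D))⁻¹ *ᵥ Sum.elim (c • A *ᵥ x) (d • D *ᵥ y) =
      Sum.elim ((a⁻¹ * c) • x) ((b⁻¹ * d) • y) := by
  have := (fromBlocks (a • A) 0 0 (b • D)).invertibleOfIsUnitDet
    (isUnit_det_fromBlocks_smul hA hD ha.isUnit hb.isUnit)
  refine inv_mulVec_eq_vec ?_
  rw [fromBlocks_smul_mulVec_sumElim, mulVec_smul, mulVec_smul, smul_smul, smul_smul,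
    mul_inv_cancel_left₀ ha, mul_inv_cancel_left₀ hb]

end Matrix

theorem stmt_1 (p₁ p₂ : ℕ) (t k : ℝ) (ht : t ∈ Set.Ioo (0:ℝ) 1) (hk : 1 < k)
    (SigS : Matrix (Fin p₁) (Fin p₁) ℝ) (SigSC : Matrix (Fin p₂) (Fin p₂) ℝ)
    (hS : SigS.PosDef) (hSC : SigSC.PosDef)
    (u : Fin p₁ → ℝ) (v : Fin p₂ → ℝ)
    (Mb : Matrix (Fin p₁ ⊕ Fin p₂) (Fin p₁ ⊕ Fin p₂) ℝ)
    (hMb : Mb = Matrix.fromBlocks SigS 0 0 SigSC)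
    (Ma : Matrix (Fin p₁ ⊕ Fin p₂) (Fin p₁ ⊕ Fin p₂) ℝ)
    (hMa : Ma = Matrix.fromBlocks (k⁻¹ • SigS) 0 0 (k • SigSC))
    (βb βa : Fin p₁ ⊕ Fin p₂ → ℝ)
    (hβb : βb = Sum.elim u (0 : Fin p₂ → ℝ)) (hβa : βa = Sum.elim (0 : Fin p₁ → ℝ) v)
    (M : Matrix (Fin p₁ ⊕ Fin p₂) (Fin p₁ ⊕ Fin p₂) ℝ)
    (hM : M = (1 - t) • Mb + t • Ma) :
    IsUnit M.det ∧
      M⁻¹ *ᵥ ((1 - t) • (Mb *ᵥ βb) + t • (Ma *ᵥ βa)) =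
        Sum.elim (((t * k⁻¹ + (1 - t))⁻¹ * (1 - t)) • u)
          (((t * k + (1 - t))⁻¹ * (k * t)) • v) := by
  obtain ⟨ht0, ht1⟩ := ht
  have hk0 : 0 < k := one_pos.trans hk
  have ha : 0 < t * k⁻¹ + (1 - t) := by positivity [sub_pos.2 ht1]
  have hb : 0 < t * k + (1 - t) := by positivity [sub_pos.2 ht1]
  have hM' :
      M = fromBlocks ((t * k⁻¹ + (1 - t)) • SigS) 0 0 ((t * k + (1 - t)) • SigSC) := by
    rw [hM, hMb, hMa, smul_fromBlocks_add_smul_fromBlocks_smul]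
  have hrhs : (1 - t) • (Mb *ᵥ βb) + t • (Ma *ᵥ βa) =
      Sum.elim ((1 - t) • SigS *ᵥ u) ((k * t) • SigSC *ᵥ v) := by
    subst hMb hMa hβb hβa
    ext (i | i)
    · simp [fromBlocks_mulVec]
    · simp [fromBlocks_mulVec, smul_mulVec]
      ring
  have hSdet := hS.isUnit.map detMonoidHom
  have hSCdet := hSC.isUnit.map detMonoidHom
  rw [hM', hrhs]
  exact ⟨isUnit_det_fromBlocks_smul hSdet hSCdet ha.ne'.isUnit hb.ne'.isUnit,
    inv_fromBlocks_smul_mulVec_sumElim hSdet hSCdet ha.ne' hb.ne' _ _ u v⟩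
end

section
/- With the setup of the poisoned least-squares estimator: let t ∈ (0,1), k > 1, Σ_S, Σ_{S^C} positive definite, β_b = (u,0), β_a = (0,v), a = uᵀΣ_S u > 0, b = vᵀΣ_{S^C} v > 0, and β̂ the block vector with blocks [t/k + (1-t)]⁻¹(1-t)·u and [tk + (1-t)]⁻¹ kt·v. Then (β̂ - β_b)ᵀ M_b (β̂ - β_b) / a = (t/k / (t/k + 1-t))² + (tk/(tk + 1-t))² · (b/a), where M_b = diag(Σ_S, Σ_{S^C}). -/
/-! The error `β̂ - β_b` is blockwise a scalar multiple of `(u, v)`, with scalars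
`-(t/k)/(t/k + 1 - t)` and `tk/(tk + 1 - t)`; since `M_b` is block diagonal, its quadratic form
splits into these squared scalars times `a` and `b`. -/

open Matrix

section BlockQuadraticForm

variable {R m n : Type*} [CommSemiring R] [Fintype m] [Fintype n]

theorem Matrix.dotProduct_fromBlocks_diagonal_mulVec_sumElim (A : Matrix m m R)
    (D : Matrix n n R) (x : m → R) (y : n → R) :
    Sum.elim x y ⬝ᵥ (fromBlocks A 0 0 D *ᵥ Sum.elim x y) = x ⬝ᵥ (A *ᵥ x) + y ⬝ᵥ (D *ᵥ y) := by
  simp only [fromBlocks_mulVec, dotProduct_block, Sum.elim_comp_inl, Sum.elim_comp_inr,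
    zero_mulVec, add_zero, zero_add]

theorem Matrix.smul_dotProduct_mulVec_smul (A : Matrix m m R) (c : R) (x : m → R) :
    (c • x) ⬝ᵥ (A *ᵥ (c • x)) = c ^ 2 * (x ⬝ᵥ (A *ᵥ x)) := by
  rw [mulVec_smul, smul_dotProduct, dotProduct_smul, smul_eq_mul, smul_eq_mul, ← mul_assoc, sq]

end BlockQuadraticForm

theorem inv_mul_sub_one_eq_neg_div {K : Type*} [Field K] {s r : K} (h : s + r ≠ 0) :
    (s + r)⁻¹ * r - 1 = -(s / (s + r)) := by
  field_simp
  ring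

theorem stmt_2_general (p₁ p₂ : ℕ) (t k : ℝ) (ht : t ∈ Set.Ioo (0:ℝ) 1) (hk : 1 < k)
    (SigS : Matrix (Fin p₁) (Fin p₁) ℝ) (SigSC : Matrix (Fin p₂) (Fin p₂) ℝ)
    (u : Fin p₁ → ℝ) (v : Fin p₂ → ℝ) (a b : ℝ)
    (ha : a = u ⬝ᵥ (SigS *ᵥ u)) (hb : b = v ⬝ᵥ (SigSC *ᵥ v))
    (ha0 : 0 < a)
    (βb : Fin p₁ ⊕ Fin p₂ → ℝ) (hβb : βb = Sum.elim u (0 : Fin p₂ → ℝ))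
    (βhat : Fin p₁ ⊕ Fin p₂ → ℝ)
    (hβhat : βhat = Sum.elim (((t / k + (1 - t))⁻¹ * (1 - t)) • u)
      (((t * k + (1 - t))⁻¹ * (k * t)) • v))
    (Mb : Matrix (Fin p₁ ⊕ Fin p₂) (Fin p₁ ⊕ Fin p₂) ℝ)
    (hMb : Mb = Matrix.fromBlocks SigS 0 0 SigSC) :
    (βhat - βb) ⬝ᵥ (Mb *ᵥ (βhat - βb)) / a =
      (t / k / (t / k + (1 - t)))^2 + (t * k / (t * k + (1 - t)))^2 * (b / a) := by
  obtain ⟨ht0, ht1⟩ := ht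
  have hden : t / k + (1 - t) ≠ 0 := by
    have : 0 < 1 - t := by linarith
    have : 0 < k := by linarith
    positivity
  have hdiff : βhat - βb = Sum.elim (-(t / k / (t / k + (1 - t))) • u)
      ((t * k / (t * k + (1 - t))) • v) := by
    subst hβhat hβb
    funext i
    rcases i with i | i
    · simp only [Pi.sub_apply, Sum.elim_inl, ← inv_mul_sub_one_eq_neg_div hden, sub_smul,
        one_smul]
    · simp only [Pi.sub_apply, Sum.elim_inr, Pi.zero_apply, sub_zero, ← inv_mul_eq_div,
        mul_comm t k]
  rw [hdiff, hMb, dotProduct_fromBlocks_diagonal_mulVec_sumElim, smul_dotProduct_mulVec_smul,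
    smul_dotProduct_mulVec_smul, ← ha, ← hb, neg_sq]
  field_simp

theorem stmt_2 (p₁ p₂ : ℕ) (t k : ℝ) (ht : t ∈ Set.Ioo (0:ℝ) 1) (hk : 1 < k)
    (SigS : Matrix (Fin p₁) (Fin p₁) ℝ) (SigSC : Matrix (Fin p₂) (Fin p₂) ℝ)
    (hS : SigS.PosDef) (hSC : SigSC.PosDef)
    (u : Fin p₁ → ℝ) (v : Fin p₂ → ℝ) (a b : ℝ)
    (ha : a = u ⬝ᵥ (SigS *ᵥ u)) (hb : b = v ⬝ᵥ (SigSC *ᵥ v))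
    (ha0 : 0 < a) (hb0 : 0 < b)
    (βb : Fin p₁ ⊕ Fin p₂ → ℝ) (hβb : βb = Sum.elim u (0 : Fin p₂ → ℝ))
    (βhat : Fin p₁ ⊕ Fin p₂ → ℝ)
    (hβhat : βhat = Sum.elim (((t / k + (1 - t))⁻¹ * (1 - t)) • u)
      (((t * k + (1 - t))⁻¹ * (k * t)) • v))
    (Mb : Matrix (Fin p₁ ⊕ Fin p₂) (Fin p₁ ⊕ Fin p₂) ℝ)
    (hMb : Mb = Matrix.fromBlocks SigS 0 0 SigSC) :
    (βhat - βb) ⬝ᵥ (Mb *ᵥ (βhat - βb)) / a =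
      (t / k / (t / k + (1 - t)))^2 + (t * k / (t * k + (1 - t)))^2 * (b / a) :=
  stmt_2_general p₁ p₂ t k ht hk SigS SigSC u v a b ha hb ha0 βb hβb βhat hβhat Mb hMb
end

section
/- Let t ∈ (0,1), w ∈ (0,1), k > 1, Σ_S, Σ_{S^C} positive definite, β_b = (u,0), β_a = (0,v). Define M = (1-w)[(1-t)·diag(Σ_S, Σ_{S^C}) + t·diag(k⁻¹Σ_S, kΣ_{S^C})] + w·diag(Σ_S, Σ_{S^C}) and r = (1-w)[(1-t)·diag(Σ_S,Σ_{S^C})β_b + t·diag(k⁻¹Σ_S,kΣ_{S^C})β_a]. Then M is invertible and M⁻¹r equals the block vector with first block δ₁·u and second block δ₂·v, where δ₁ = (1-w)(1-t)/[(1-w)(t/k + (1-t)) + w] and δ₂ = (1-w)tk/[(1-w)(tk + (1-t)) + w]. -/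
open Matrix

set_option maxHeartbeats 1000000

theorem stmt_8 (p₁ p₂ : ℕ) (t w k : ℝ) (ht : t ∈ Set.Ioo (0:ℝ) 1)
    (hw : w ∈ Set.Ioo (0:ℝ) 1) (hk : 1 < k)
    (SigS : Matrix (Fin p₁) (Fin p₁) ℝ) (SigSC : Matrix (Fin p₂) (Fin p₂) ℝ)
    (hS : SigS.PosDef) (hSC : SigSC.PosDef)
    (u : Fin p₁ → ℝ) (v : Fin p₂ → ℝ)
    (βb βa : Fin p₁ ⊕ Fin p₂ → ℝ)
    (hβb : βb = Sum.elim u (0 : Fin p₂ → ℝ)) (hβa : βa = Sum.elim (0 : Fin p₁ → ℝ) v)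
    (Mb Ma M : Matrix (Fin p₁ ⊕ Fin p₂) (Fin p₁ ⊕ Fin p₂) ℝ)
    (hMb : Mb = Matrix.fromBlocks SigS 0 0 SigSC)
    (hMa : Ma = Matrix.fromBlocks (k⁻¹ • SigS) 0 0 (k • SigSC))
    (hM : M = (1 - w) • ((1 - t) • Mb + t • Ma) + w • Mb)
    (r : Fin p₁ ⊕ Fin p₂ → ℝ)
    (hr : r = (1 - w) • ((1 - t) • (Mb *ᵥ βb) + t • (Ma *ᵥ βa))) :
    IsUnit M.det ∧
      M⁻¹ *ᵥ r =
        Sum.elim (((1 - w) * (1 - t) / ((1 - w) * (t / k + (1 - t)) + w)) • u)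
          (((1 - w) * t * k / ((1 - w) * (t * k + (1 - t)) + w)) • v) := by
  obtain ⟨ht0, ht1⟩ := ht
  obtain ⟨hw0, hw1⟩ := hw
  have hk0 : (0:ℝ) < k := lt_trans one_pos hk
  have hkne : k ≠ 0 := ne_of_gt hk0
  have h1w : (0:ℝ) < 1 - w := by linarith
  have h1t : (0:ℝ) < 1 - t := by linarith
  set c₁ : ℝ := (1 - w) * (t / k + (1 - t)) + w with hc₁
  set c₂ : ℝ := (1 - w) * (t * k + (1 - t)) + w with hc₂
  have hc₁pos : 0 < c₁ := add_pos (mul_pos h1w (add_pos (div_pos ht0 hk0) h1t)) hw0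
  have hc₂pos : 0 < c₂ := add_pos (mul_pos h1w (add_pos (mul_pos ht0 hk0) h1t)) hw0
  have hc₁ne : c₁ ≠ 0 := ne_of_gt hc₁pos
  have hc₂ne : c₂ ≠ 0 := ne_of_gt hc₂pos
  have hMblock : M = Matrix.fromBlocks (c₁ • SigS) 0 0 (c₂ • SigSC) := by
    subst hM hMb hMa
    ext i j
    rcases i with i | i <;> rcases j with j | j <;>
      simp only [Matrix.add_apply, Matrix.smul_apply, Matrix.fromBlocks_apply₁₁,
        Matrix.fromBlocks_apply₁₂, Matrix.fromBlocks_apply₂₁, Matrix.fromBlocks_apply₂₂,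
        Matrix.zero_apply, smul_eq_mul, mul_zero, add_zero, zero_add, smul_zero]
    · rw [hc₁, div_eq_mul_inv]
      ring
    · rw [hc₂]; ring
  have hdetS : SigS.det ≠ 0 := ne_of_gt hS.det_pos
  have hdetSC : SigSC.det ≠ 0 := ne_of_gt hSC.det_pos
  have hdet : M.det ≠ 0 := by
    rw [hMblock, Matrix.det_fromBlocks_zero₂₁, Matrix.det_smul, Matrix.det_smul]
    positivity
  have hunit : IsUnit M.det := isUnit_iff_ne_zero.mpr hdet
  refine ⟨hunit, ?_⟩
  set x : Fin p₁ ⊕ Fin p₂ → ℝ :=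
    Sum.elim (((1 - w) * (1 - t) / c₁) • u) (((1 - w) * t * k / c₂) • v) with hx
  have key : M *ᵥ x = r := by
    subst hr hβb hβa hMb hMa
    rw [hMblock]
    funext i
    rcases i with i | i <;>
      simp only [hx, Matrix.fromBlocks_mulVec, Sum.elim_comp_inl, Sum.elim_comp_inr,
        Matrix.mulVec_zero, Matrix.zero_mulVec, Matrix.mulVec_smul, Matrix.smul_mulVec,
        Sum.elim_inl, Sum.elim_inr, Pi.add_apply, Pi.smul_apply, smul_eq_mul,
        Pi.zero_apply, mul_zero, add_zero, zero_add, smul_zero]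
    · field_simp
    · field_simp
  calc M⁻¹ *ᵥ r = M⁻¹ *ᵥ (M *ᵥ x) := by rw [key]
    _ = (M⁻¹ * M) *ᵥ x := Matrix.mulVec_mulVec _ _ _
    _ = x := by rw [Matrix.nonsing_inv_mul M hunit, Matrix.one_mulVec]
end
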